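/- Let M →f E →g N →δ M⟦1⟧ be a distinguished triangle in C whose connecting morphism δ is nonzero (a non-split triangle). Assume moreover that C satisfies the Ext¹-symmetry condition: for all objects X, Y of C one has dim_k Hom(X, Y⟦1⟧) = dim_k Hom(Y, X⟦1⟧). Then dim_k Hom(E, E⟦1⟧) < dim_k Hom(M ⊕ N, (M ⊕ N)⟦1⟧). -/

import Mathlib

/-!
Applying `Hom(-, M⟦1⟧)`, `Hom(-, N⟦1⟧)` and `Hom(E, -)` (to the shifted triangle) gives three
sequences exact in the middle, so `dim Hom(E, E⟦1⟧)` is at most the sum of the four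
dimensions `dim Hom(X, Y⟦1⟧)`, `X, Y ∈ {M, N}`, which add up to `dim Ext¹(M ⊞ N, M ⊞ N)`.
The inequality is strict because `δ ∈ Hom(N, M⟦1⟧)` is a nonzero element killed by
precomposition with `g`, so the first sequence is not injective on the left.
-/

open CategoryTheory CategoryTheory.Limits CategoryTheory.Pretriangulated Module

section ExactDimension

variable {k : Type*} [Field k] {A B D : Type*}
  [AddCommGroup A] [Module k A] [AddCommGroup B] [Module k B] [AddCommGroup D] [Module k D]
  [FiniteDimensional k A] [FiniteDimensional k B] [FiniteDimensional k D]

lemma finrank_le_finrank_range_add_of_ker_le_range (α : A →ₗ[k] B) (β : B →ₗ[k] D)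
    (h : LinearMap.ker β ≤ LinearMap.range α) :
    finrank k B ≤ finrank k (LinearMap.range α) + finrank k D := by
  have hβ := β.finrank_range_add_finrank_ker
  have hker := Submodule.finrank_mono h
  have hrange := Submodule.finrank_le (LinearMap.range β)
  omega

lemma finrank_le_add_of_ker_le_range (α : A →ₗ[k] B) (β : B →ₗ[k] D)
    (h : LinearMap.ker β ≤ LinearMap.range α) :
    finrank k B ≤ finrank k A + finrank k D :=
  (finrank_le_finrank_range_add_of_ker_le_range α β h).trans
    (Nat.add_le_add_right α.finrank_range_le _)

lemma finrank_lt_add_of_ker_le_range (α : A →ₗ[k] B) (β : B →ₗ[k] D)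
    (h : LinearMap.ker β ≤ LinearMap.range α) (hα : LinearMap.ker α ≠ ⊥) :
    finrank k B < finrank k A + finrank k D := by
  have hexact := finrank_le_finrank_range_add_of_ker_le_range α β h
  have hrank := α.finrank_range_add_finrank_ker
  have hker := Submodule.one_le_finrank_iff.2 hα
  omega

end ExactDimension

section Biproduct

variable {k : Type*} [Field k] {C : Type*} [Category C] [Preadditive C] [HasBinaryBiproducts C]

noncomputable def biprodHomLinearEquiv [Linear k C] (M N X : C) :
    ((M ⊞ N) ⟶ X) ≃ₗ[k] (M ⟶ X) × (N ⟶ X) where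
  toFun φ := (biprod.inl ≫ φ, biprod.inr ≫ φ)
  map_add' φ ψ := by simp
  map_smul' r φ := by simp
  invFun p := biprod.desc p.1 p.2
  left_inv φ := by apply biprod.hom_ext' <;> simp
  right_inv p := by simp

noncomputable def homBiprodLinearEquiv [Linear k C] (X M N : C) :
    (X ⟶ (M ⊞ N)) ≃ₗ[k] (X ⟶ M) × (X ⟶ N) where
  toFun φ := (φ ≫ biprod.fst, φ ≫ biprod.snd)
  map_add' φ ψ := by simp
  map_smul' r φ := by simp
  invFun p := biprod.lift p.1 p.2
  left_inv φ := by apply biprod.hom_ext <;> simp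
  right_inv p := by simp

lemma finrank_hom_obj_biprod {D : Type*} [Category D] [Preadditive D] [Linear k D]
    [HasBinaryBiproducts D] [∀ X Y : D, FiniteDimensional k (X ⟶ Y)]
    (F : C ⥤ D) [F.Additive] (X : D) (M N : C) :
    finrank k (X ⟶ F.obj (M ⊞ N)) = finrank k (X ⟶ F.obj M) + finrank k (X ⟶ F.obj N) := by
  have := preservesBinaryBiproducts_of_preservesBiproducts F
  rw [(Linear.homCongr k (Iso.refl X) (F.mapBiprod M N)).finrank_eq,
    (homBiprodLinearEquiv X _ _).finrank_eq, finrank_prod]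

lemma finrank_biprod_hom [Linear k C] [∀ X Y : C, FiniteDimensional k (X ⟶ Y)] (M N X : C) :
    finrank k ((M ⊞ N) ⟶ X) = finrank k (M ⟶ X) + finrank k (N ⟶ X) := by
  rw [(biprodHomLinearEquiv M N X).finrank_eq, finrank_prod]

end Biproduct

namespace CategoryTheory.Pretriangulated.Triangle

variable {k : Type*} [Field k] {C : Type*} [Category C] [Preadditive C] [Linear k C]
  [HasZeroObject C] [HasShift C ℤ] [∀ n : ℤ, (CategoryTheory.shiftFunctor C n).Additive]
  [Pretriangulated C] (T : Triangle C)

lemma finrank_hom_obj₂_le [∀ X Y : C, FiniteDimensional k (X ⟶ Y)]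
    (hT : T ∈ distTriang C) (X : C) :
    finrank k (X ⟶ T.obj₂) ≤ finrank k (X ⟶ T.obj₁) + finrank k (X ⟶ T.obj₃) :=
  finrank_le_add_of_ker_le_range (Linear.rightComp k X T.mor₁) (Linear.rightComp k X T.mor₂)
    fun φ hφ ↦ let ⟨ψ, hψ⟩ := T.coyoneda_exact₂ hT φ hφ; ⟨ψ, hψ.symm⟩

lemma ker_leftComp_mor₁_le_range_leftComp_mor₂ (hT : T ∈ distTriang C) (X : C) :
    LinearMap.ker (Linear.leftComp k X T.mor₁) ≤ LinearMap.range (Linear.leftComp k X T.mor₂) :=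
  fun φ hφ ↦ let ⟨ψ, hψ⟩ := T.yoneda_exact₂ hT φ hφ; ⟨ψ, hψ.symm⟩

lemma finrank_obj₂_hom_le [∀ X Y : C, FiniteDimensional k (X ⟶ Y)]
    (hT : T ∈ distTriang C) (X : C) :
    finrank k (T.obj₂ ⟶ X) ≤ finrank k (T.obj₃ ⟶ X) + finrank k (T.obj₁ ⟶ X) :=
  finrank_le_add_of_ker_le_range _ _ (T.ker_leftComp_mor₁_le_range_leftComp_mor₂ hT X)

lemma finrank_obj₂_hom_shift_obj₁_lt [∀ X Y : C, FiniteDimensional k (X ⟶ Y)]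
    (hT : T ∈ distTriang C) (h₃ : T.mor₃ ≠ 0) :
    finrank k (T.obj₂ ⟶ T.obj₁⟦(1 : ℤ)⟧) <
      finrank k (T.obj₃ ⟶ T.obj₁⟦(1 : ℤ)⟧) + finrank k (T.obj₁ ⟶ T.obj₁⟦(1 : ℤ)⟧) :=
  finrank_lt_add_of_ker_le_range _ _ (T.ker_leftComp_mor₁_le_range_leftComp_mor₂ hT _)
    ((Submodule.ne_bot_iff _).2 ⟨T.mor₃, comp_distTriang_mor_zero₂₃ T hT, h₃⟩)

end CategoryTheory.Pretriangulated.Triangle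

/-- Let `k` be a field and `C` a `k`-linear pretriangulated category
with binary biproducts whose Hom-spaces are finite dimensional over `k`.
If `M ⟶ E ⟶ N ⟶ M⟦1⟧` is a non-split distinguished triangle (the connecting
morphism `δ` is nonzero), and `C` satisfies the Ext¹-symmetry condition
`dim Hom(X, Y⟦1⟧) = dim Hom(Y, X⟦1⟧)` for all `X Y`, then
`dim Ext¹(E, E) < dim Ext¹(M ⊕ N, M ⊕ N)`. -/
theorem stmt0 {k : Type*} [Field k]
    {C : Type*} [Category C] [Preadditive C] [Linear k C]
    [HasZeroObject C] [HasShift C ℤ]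
    [∀ n : ℤ, (shiftFunctor C n).Additive] [Pretriangulated C]
    [HasBinaryBiproducts C]
    [∀ X Y : C, FiniteDimensional k (X ⟶ Y)]
    (M E N : C) (f : M ⟶ E) (g : E ⟶ N) (δ : N ⟶ M⟦(1 : ℤ)⟧)
    (hT : Triangle.mk f g δ ∈ distTriang C) (hδ : δ ≠ 0)
    (hsym : ∀ X Y : C,
      finrank k (X ⟶ Y⟦(1 : ℤ)⟧) = finrank k (Y ⟶ X⟦(1 : ℤ)⟧)) :
    finrank k (E ⟶ E⟦(1 : ℤ)⟧) <
      finrank k ((M ⊞ N) ⟶ (M ⊞ N)⟦(1 : ℤ)⟧) := by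
  have hE : finrank k (E ⟶ E⟦(1 : ℤ)⟧) ≤
      finrank k (E ⟶ M⟦(1 : ℤ)⟧) + finrank k (E ⟶ N⟦(1 : ℤ)⟧) :=
    Triangle.finrank_hom_obj₂_le _ (Triangle.shift_distinguished _ hT 1) E
  have hM : finrank k (E ⟶ M⟦(1 : ℤ)⟧) <
      finrank k (N ⟶ M⟦(1 : ℤ)⟧) + finrank k (M ⟶ M⟦(1 : ℤ)⟧) :=
    Triangle.finrank_obj₂_hom_shift_obj₁_lt _ hT hδ
  have hN : finrank k (E ⟶ N⟦(1 : ℤ)⟧) ≤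
      finrank k (N ⟶ N⟦(1 : ℤ)⟧) + finrank k (M ⟶ N⟦(1 : ℤ)⟧) :=
    Triangle.finrank_obj₂_hom_le _ hT _
  rw [finrank_biprod_hom, finrank_hom_obj_biprod, finrank_hom_obj_biprod]
  omega
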